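/- Let q > 1 be real, D = diag(q, −q⁻¹), and U = ((1/[2]_q, √[3]_q/[2]_q), (−√[3]_q/[2]_q, 1/[2]_q)). Then for all integers a and b, the matrix M = Dᵃ·(U·Dᵇ·Uᵀ) has trace( M ) = ( q^{a+b} + (−1)^{a+b} q^{−a−b} + [3]_q·((−1)^b q^{a−b} + (−1)^a q^{b−a}) ) / [2]_q², and det( M ) = (−1)^{a+b}. -/

import Mathlib

open Matrix

/-- The quantum integer `[n]_q = (qⁿ − q⁻ⁿ)/(q − q⁻¹)`. -/
noncomputable def qn (q : ℝ) (n : ℤ) : ℝ := (q ^ n - q ^ (-n)) / (q - q⁻¹)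

/-- Integer powers of the diagonal R-matrix: `Dᵃ = diag(qᵃ, (−q⁻¹)ᵃ)`. -/
noncomputable def Dpow (q : ℝ) (a : ℤ) : Matrix (Fin 2) (Fin 2) ℝ :=
  !![q ^ a, 0; 0, (-q⁻¹) ^ a]

/-- The mixing (Racah) matrix `U`. -/
noncomputable def Umat (q : ℝ) : Matrix (Fin 2) (Fin 2) ℝ :=
  !![1 / qn q 2, Real.sqrt (qn q 3) / qn q 2;
     -Real.sqrt (qn q 3) / qn q 2, 1 / qn q 2]

/-
`Dᵃ` is diagonal and `U` is a rotation with `cos = 1/[2]_q` and `sin = √[3]_q/[2]_q`, a genuine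
rotation because `[2]_q² = [3]_q + 1`. Conjugating the diagonal `Dᵇ` by a rotation mixes its
entries with weights `cos²` and `sin²`, which gives the trace; `det U = 1` and
`det Dⁿ = (q · (−q⁻¹))ⁿ = (−1)ⁿ` give the determinant.
-/

section Rotation

variable {R : Type*} [CommRing R]

theorem det_fin_two_rotation (c s : R) : !![c, s; -s, c].det = c ^ 2 + s ^ 2 := by
  rw [det_fin_two_of]
  ring

theorem trace_diag_mul_rotation_conj (x₀ x₁ y₀ y₁ c s : R) :
    (!![x₀, 0; 0, x₁] * (!![c, s; -s, c] * !![y₀, 0; 0, y₁] * !![c, s; -s, c]ᵀ)).trace =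
      (x₀ * y₀ + x₁ * y₁) * c ^ 2 + (x₀ * y₁ + x₁ * y₀) * s ^ 2 := by
  simp only [trace_fin_two, mul_apply, transpose_apply, Fin.sum_univ_two, of_apply, cons_val',
    cons_val_zero, cons_val_one, empty_val', cons_val_fin_one]
  ring

end Rotation

section QuantumIntegers

variable {q : ℝ}

theorem qn_two (hq : q - q⁻¹ ≠ 0) : qn q 2 = q + q⁻¹ := by
  rw [qn, div_eq_iff hq]
  simp only [_root_.zpow_neg, zpow_ofNat]
  ring

theorem qn_three (hq : q - q⁻¹ ≠ 0) : qn q 3 = q ^ 2 + 1 + q⁻¹ ^ 2 := by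
  have hq0 : q ≠ 0 := by rintro rfl; simp at hq
  rw [qn, div_eq_iff hq]
  simp only [_root_.zpow_neg, zpow_ofNat]
  field_simp
  ring

theorem qn_two_sq (hq : q - q⁻¹ ≠ 0) : qn q 2 ^ 2 = qn q 3 + 1 := by
  have hq0 : q ≠ 0 := by rintro rfl; simp at hq
  rw [qn_two hq, qn_three hq]
  field_simp
  ring

theorem sub_inv_pos_of_one_lt (hq : 1 < q) : 0 < q - q⁻¹ :=
  sub_pos.2 ((inv_lt_one_of_one_lt₀ hq).trans hq)

theorem qn_three_nonneg (hq : 1 < q) : 0 ≤ qn q 3 := by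
  have hn : q ^ (-3 : ℤ) ≤ q ^ (3 : ℤ) := zpow_le_zpow_right₀ hq.le (by norm_num)
  exact div_nonneg (sub_nonneg.2 hn) (sub_inv_pos_of_one_lt hq).le

theorem qn_two_ne_zero (hq : 1 < q) : qn q 2 ≠ 0 := by
  rw [qn_two (sub_inv_pos_of_one_lt hq).ne']
  have : 0 < q := by linarith
  positivity

end QuantumIntegers

theorem neg_inv_zpow (q : ℝ) (n : ℤ) : (-q⁻¹) ^ n = (-1) ^ n * q ^ (-n) := by
  rw [neg_eq_neg_one_mul, mul_zpow, _root_.inv_zpow']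

theorem det_Dpow {q : ℝ} (hq : q ≠ 0) (n : ℤ) : (Dpow q n).det = (-1) ^ n := by
  rw [Dpow, det_fin_two_of, mul_zero, sub_zero, ← mul_zpow, mul_neg, mul_inv_cancel₀ hq]

theorem Umat_eq_rotation (q : ℝ) :
    Umat q = !![1 / qn q 2, √(qn q 3) / qn q 2; -(√(qn q 3) / qn q 2), 1 / qn q 2] := by
  rw [Umat, neg_div]

theorem det_Umat {q : ℝ} (hq : 1 < q) : (Umat q).det = 1 := by
  rw [Umat_eq_rotation, det_fin_two_rotation, div_pow, div_pow, Real.sq_sqrt (qn_three_nonneg hq),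
    ← add_div, one_pow, add_comm, ← qn_two_sq (sub_inv_pos_of_one_lt hq).ne',
    div_self (pow_ne_zero 2 (qn_two_ne_zero hq))]

/-- for all integers `a, b`, the matrix `M = Dᵃ·(U·Dᵇ·Uᵀ)` has
`trace M = (q^{a+b} + (−1)^{a+b} q^{−a−b} + [3]_q·((−1)^b q^{a−b} + (−1)^a q^{b−a}))/[2]_q²`
and `det M = (−1)^{a+b}`. -/
theorem trace_det_word_ab (q : ℝ) (hq : 1 < q) (a b : ℤ) :
    (Dpow q a * (Umat q * Dpow q b * (Umat q)ᵀ)).trace =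
      (q ^ (a + b) + (-1 : ℝ) ^ (a + b) * q ^ (-(a + b)) +
        qn q 3 * ((-1 : ℝ) ^ b * q ^ (a - b) + (-1 : ℝ) ^ a * q ^ (b - a))) /
        (qn q 2) ^ 2 ∧
    (Dpow q a * (Umat q * Dpow q b * (Umat q)ᵀ)).det = (-1 : ℝ) ^ (a + b) := by
  have hq0 : q ≠ 0 := by positivity
  constructor
  · rw [Dpow, Dpow, Umat_eq_rotation, trace_diag_mul_rotation_conj, div_pow, div_pow,
      Real.sq_sqrt (qn_three_nonneg hq), neg_inv_zpow, neg_inv_zpow, zpow_add₀ hq0, neg_add,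
      zpow_add₀ hq0, zpow_sub₀ hq0, zpow_sub₀ hq0, zpow_add₀ (neg_ne_zero.2 one_ne_zero)]
    simp only [_root_.zpow_neg]
    ring
  · rw [det_mul, det_mul, det_mul, det_transpose, det_Dpow hq0, det_Dpow hq0, det_Umat hq,
      zpow_add₀ (neg_ne_zero.2 one_ne_zero)]
    ring
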